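/- arXiv:2310.19364 — 5 statements merged into one kernel-verified Lean document; each statement's English description precedes it below -/
import Mathlib

section
/- Let n ≥ 2, let f : ℝ → ℝⁿ be a topological embedding with image C (a self-avoiding complete curve), and let w ∈ ℝⁿ be a nonzero vector with w + C = C. Then there exists a bounded subset B ⊆ C such that C is the disjoint union of the translates kw + B for k ∈ ℤ. -/
/-!
Translation by `w` preserves `C = f(ℝ)`, so `f` conjugates it to a bijection `e` of `ℝ` with
`f (e t) = w + f t`; since `f` is an embedding, `e` is continuous, and `w ≠ 0` means `e` has no
fixed point. By the intermediate value theorem `e` is then strictly increasing and moves all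
points in the same direction, say `t < e t` (otherwise replace `e, w` by `e⁻¹, -w`). The orbit
`k ↦ e^k a` is strictly increasing and unbounded in both directions, because a bounded monotone
orbit would converge to a fixed point. Hence the intervals `e^k [a, e a)` partition `ℝ`, and `f`
maps them onto the translates `k • w + f [a, e a)`.
-/

open Set Function Equiv

theorem Function.Injective.exists_perm_semiconj {α β : Type*} {f : α → β} (hf : Injective f)
    {σ : Perm β} (hσ : σ '' range f = range f) : ∃ e : Perm α, Semiconj f e σ := by
  have hmem : ∀ y, σ y ∈ range f ↔ y ∈ range f := fun y => by
    conv_lhs => rw [← hσ]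
    exact σ.injective.mem_set_image
  let ι := ofInjective f hf
  exact ⟨(ι.trans (σ.subtypePerm hmem)).trans ι.symm, fun x => by
    simp [ι, apply_ofInjective_symm]⟩

theorem Function.Semiconj.zpow_perm {α β : Type*} {f : α → β} {e : Perm α} {σ : Perm β}
    (h : Semiconj f e σ) : ∀ k : ℤ, Semiconj f ⇑(e ^ k) ⇑(σ ^ k)
  | (n : ℕ) => by simpa only [zpow_natCast, Perm.coe_pow] using h.iterate_right n
  | .negSucc n => by
    have hinv : Semiconj f ⇑e⁻¹ ⇑σ⁻¹ :=
      h.inverses_right e.apply_symm_apply σ.symm_apply_apply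
    simpa only [zpow_negSucc, ← inv_pow, Perm.coe_pow] using hinv.iterate_right (n + 1)

namespace Equiv.Perm

variable {α : Type*} [LinearOrder α] {e : Perm α}

theorem strictMono_inv (he : StrictMono e) : StrictMono ⇑e⁻¹ :=
  fun a b h => he.lt_iff_lt.1 (by simpa using h)

theorem strictMono_zpow (he : StrictMono e) : ∀ k : ℤ, StrictMono ⇑(e ^ k)
  | (n : ℕ) => by simpa only [zpow_natCast, coe_pow] using he.iterate n
  | .negSucc n => by
    simpa only [zpow_negSucc, ← inv_pow, coe_pow] using (strictMono_inv he).iterate (n + 1)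

end Equiv.Perm

theorem forall_lt_apply_or_forall_apply_lt {α : Type*} [LinearOrder α] [TopologicalSpace α]
    [OrderClosedTopology α] [PreconnectedSpace α] {g : α → α} (hg : Continuous g)
    (hfix : ∀ x, g x ≠ x) : (∀ x, x < g x) ∨ ∀ x, g x < x := by
  by_contra! h
  obtain ⟨⟨a, ha⟩, b, hb⟩ := h
  obtain ⟨x, hx⟩ := intermediate_value_univ₂ continuous_id hg hb ha
  exact hfix x hx.symm

theorem Monotone.existsUnique_mem_Ico_succ {β : Type*} [LinearOrder β] {s : ℤ → β}
    (hs : Monotone s) (habove : ¬BddAbove (range s)) (hbelow : ¬BddBelow (range s)) (t : β) :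
    ∃! k : ℤ, t ∈ Ico (s k) (s (k + 1)) := by
  obtain ⟨_, ⟨K, rfl⟩, hK⟩ := not_bddAbove_iff.1 habove t
  obtain ⟨_, ⟨L, rfl⟩, hL⟩ := not_bddBelow_iff.1 hbelow t
  obtain ⟨k, hk, hmax⟩ := Int.exists_greatest_of_bdd (P := fun z => s z ≤ t)
    ⟨K, fun z hz => le_of_not_gt fun h => (hK.trans_le (hs h.le)).not_ge hz⟩ ⟨L, hL.le⟩
  refine ⟨k, ⟨hk, lt_of_not_ge fun h => (lt_add_one k).not_ge (hmax _ h)⟩, fun j hj => ?_⟩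
  refine le_antisymm (hmax j hj.1) (le_of_not_gt fun h => ?_)
  exact (hj.2.trans_le (hs (by omega : j + 1 ≤ k))).not_ge hk

section OrderTopology

variable {α : Type*} [ConditionallyCompleteLinearOrder α] [TopologicalSpace α] [OrderTopology α]

theorem Continuous.strictMono_of_injective_of_forall_apply_ne [DenselyOrdered α] {g : α → α}
    (hg : Continuous g) (hinj : Injective g) (hfix : ∀ x, g x ≠ x) : StrictMono g := by
  refine (hg.strictMono_of_inj hinj).elim id fun hanti a _ _ => ?_
  rcases forall_lt_apply_or_forall_apply_lt hg hfix with hlt | hgt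
  · exact absurd (hanti (hlt a)) (hlt (g a)).asymm
  · exact absurd (hanti (hgt a)) (hgt (g a)).asymm

theorem not_bddAbove_range_iterate {T : α → α} (hT : Continuous T) (hlt : ∀ x, x < T x)
    (a : α) : ¬BddAbove (range fun n => T^[n] a) := fun hbdd => by
  have hmono : Monotone fun n => T^[n] a :=
    monotone_nat_of_le_succ fun n => by simpa only [iterate_succ_apply'] using (hlt _).le
  exact (hlt _).ne' (isFixedPt_of_tendsto_iterate (tendsto_atTop_ciSup hmono hbdd) hT.continuousAt)

theorem Equiv.Perm.existsUnique_mem_zpow_image_Ico {e : Perm α} (hmono : StrictMono e)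
    (hlt : ∀ x, x < e x) (a t : α) : ∃! k : ℤ, t ∈ (e ^ k) '' Ico a (e a) := by
  have hcont {σ : Perm α} (hσ : StrictMono σ) : Continuous σ :=
    (hσ.orderIsoOfSurjective σ σ.surjective).continuous
  set s : ℤ → α := fun k => (e ^ k) a
  have hs : StrictMono s := strictMono_int_of_lt_succ fun k => by
    simpa only [s, zpow_add_one, Perm.mul_apply] using strictMono_zpow hmono k (hlt a)
  have habove : ¬BddAbove (range s) := fun h => not_bddAbove_range_iterate (hcont hmono) hlt a <|
    h.mono <| by rintro _ ⟨n, rfl⟩; exact ⟨n, by simp [s, Perm.coe_pow]⟩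
  have hbelow : ¬BddBelow (range s) := fun h =>
    not_bddAbove_range_iterate (α := αᵒᵈ) (hcont (strictMono_inv hmono))
      (fun x => (hlt (e.symm x)).trans_eq (e.apply_symm_apply x)) a <|
    h.mono <| by
      rintro _ ⟨n, rfl⟩
      exact ⟨-n, show (e ^ (-n : ℤ)) a = _ by
        rw [zpow_neg, zpow_natCast, ← inv_pow, Perm.coe_pow]; rfl⟩
  refine (existsUnique_congr fun k => ?_).1
    (hs.monotone.existsUnique_mem_Ico_succ habove hbelow t)
  have hk := strictMono_zpow hmono k
  rw [image_eq_preimage_symm, mem_preimage, mem_Ico, mem_Ico, ← hk.le_iff_le (a := a),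
    ← hk.lt_iff_lt (b := e a), apply_symm_apply]
  simp only [s, zpow_add_one, Perm.mul_apply]

end OrderTopology

theorem Function.Semiconj.mem_range_iff_existsUnique_zsmul_add {α E : Type*}
    [ConditionallyCompleteLinearOrder α] [TopologicalSpace α] [OrderTopology α] [AddGroup E]
    {f : α → E} {e : Perm α} {w : E} (hsemi : Semiconj f e (Equiv.addLeft w)) (hf : Injective f)
    (hmono : StrictMono e) (hlt : ∀ t, t < e t) (a : α) (x : E) :
    x ∈ range f ↔ ∃! k : ℤ, ∃ b ∈ f '' Ico a (e a), x = k • w + b := by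
  have hk (k : ℤ) (t : α) : f ((e ^ k) t) = k • w + f t := by
    simpa [zsmul_addLeft] using hsemi.zpow_perm k t
  have key (k : ℤ) (t : α) :
      (∃ b ∈ f '' Ico a (e a), f t = k • w + b) ↔ t ∈ (e ^ k) '' Ico a (e a) := by
    rw [exists_mem_image, mem_image]
    simp only [← hk, hf.eq_iff, eq_comm (a := t)]
  constructor
  · rintro ⟨t, rfl⟩
    simpa only [key] using Perm.existsUnique_mem_zpow_image_Ico hmono hlt a t
  · rintro ⟨k, ⟨_, ⟨u, -, rfl⟩, rfl⟩, -⟩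
    exact ⟨(e ^ k) u, hk k u⟩

theorem Function.Semiconj.exists_isBounded_fundamental_domain {E : Type*}
    [SeminormedAddCommGroup E] [Module ℝ E] {f : ℝ → E} {e : Perm ℝ} {w : E}
    (hsemi : Semiconj f e (Equiv.addLeft w)) (hf : Continuous f) (hinj : Injective f)
    (hmono : StrictMono e) (hlt : ∀ t, t < e t) :
    ∃ B ⊆ range f, Bornology.IsBounded B ∧
      ∀ x, x ∈ range f ↔ ∃! k : ℤ, ∃ b ∈ B, x = (k : ℝ) • w + b :=
  ⟨f '' Ico 0 (e 0), image_subset_range _ _,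
    (isCompact_Icc.image hf).isBounded.subset (image_mono Ico_subset_Icc_self),
    fun x => by
      simpa only [Int.cast_smul_eq_zsmul] using
        hsemi.mem_range_iff_existsUnique_zsmul_add hinj hmono hlt 0 x⟩

theorem translation_invariant_curve_partition_general (n : ℕ)
    (f : ℝ → EuclideanSpace ℝ (Fin n)) (hf : Topology.IsEmbedding f)
    (C : Set (EuclideanSpace ℝ (Fin n))) (hC : C = Set.range f)
    (w : EuclideanSpace ℝ (Fin n)) (hw : w ≠ 0)
    (hinv : (fun x => w + x) '' C = C) :
    ∃ B ⊆ C, Bornology.IsBounded B ∧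
      ∀ x, x ∈ C ↔ ∃! k : ℤ, ∃ b ∈ B, x = (k : ℝ) • w + b := by
  subst hC
  obtain ⟨e, he⟩ := hf.injective.exists_perm_semiconj (σ := Equiv.addLeft w) hinv
  have hcont : Continuous e :=
    hf.continuous_iff.2 <| (continuous_const.add hf.continuous).congr fun t => (he t).symm
  have hfix : ∀ t, e t ≠ t := fun t h => hw <| by simpa [h] using he t
  have hmono : StrictMono e := hcont.strictMono_of_injective_of_forall_apply_ne e.injective hfix
  rcases forall_lt_apply_or_forall_apply_lt hcont hfix with hlt | hgt
  · exact he.exists_isBounded_fundamental_domain hf.continuous hf.injective hmono hlt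
  · have he' : Semiconj f ⇑e⁻¹ (Equiv.addLeft (-w)) :=
      he.inverses_right e.apply_symm_apply (neg_add_cancel_left w)
    obtain ⟨B, hBC, hB, hpart⟩ := he'.exists_isBounded_fundamental_domain hf.continuous
      hf.injective (Perm.strictMono_inv hmono)
      fun t => (e.apply_symm_apply t).symm.trans_lt (hgt _)
    refine ⟨B, hBC, hB, fun x => (hpart x).trans ?_⟩
    exact (Equiv.neg ℤ).existsUnique_congr fun k => by simp

theorem translation_invariant_curve_partition (n : ℕ) (hn : 2 ≤ n)
    (f : ℝ → EuclideanSpace ℝ (Fin n)) (hf : Topology.IsEmbedding f)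
    (C : Set (EuclideanSpace ℝ (Fin n))) (hC : C = Set.range f)
    (w : EuclideanSpace ℝ (Fin n)) (hw : w ≠ 0)
    (hinv : (fun x => w + x) '' C = C) :
    ∃ B ⊆ C, Bornology.IsBounded B ∧
      ∀ x, x ∈ C ↔ ∃! k : ℤ, ∃ b ∈ B, x = (k : ℝ) • w + b :=
  translation_invariant_curve_partition_general n f hf C hC w hw hinv
end

section
/- Let T_{λ₁⋯λₙ} be defined recursively by T = [] and T_{λ₁⋯λ_{n+1}} = T_{λ₁⋯λₙ} ++ [λ_{n+1}] ++ T_{λ₁⋯λₙ} ++ [−λ_{n+1}] ++ T_{λ₁⋯λₙ}, and index its entries from 1 to 3ⁿ − 1. Then for every k with 0 ≤ k ≤ n−1 and every i ≥ 0 with the indices in range, the entry at position 3^k(3i+1) equals λ_{k+1} and the entry at position 3^k(3i+2) equals −λ_{k+1}. -/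
/-!
Write `n = |Λ|`. Since `T_{Λμ} = T_Λ ++ [μ] ++ T_Λ ++ [-μ] ++ T_Λ` and `|T_Λ| = 3ⁿ - 1`, the
entry of `T_{Λμ}` at a (1-based) position `p < 3ⁿ⁺¹` with `3ⁿ ∤ p` is the entry of `T_Λ`
at `p mod 3ⁿ`, while positions `3ⁿ` and `2·3ⁿ` carry `μ` and `-μ`. For `k < n`, reducing
`3^k(3i + j)` modulo `3ⁿ` gives `3^k(3i' + j)` with `i' = i mod 3^(n-k-1)`, so induction on
`n` finishes the proof.
-/

/-- Auxiliary recursion: the head of the list is the last parameter λₙ. -/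
def foldTAux : List ℤ → List ℤ
  | [] => []
  | lam :: L => foldTAux L ++ [lam] ++ foldTAux L ++ [-lam] ++ foldTAux L

/-- `foldT [λ₁, …, λₙ]` is the terdragon-type folding sequence `T_{λ₁⋯λₙ}`,
satisfying `foldT [] = []` and
`foldT (Λ ++ [μ]) = foldT Λ ++ [μ] ++ foldT Λ ++ [-μ] ++ foldT Λ`. -/
def foldT (Λ : List ℤ) : List ℤ := foldTAux Λ.reverse

theorem Nat.mul_add_mod_mul_of_lt {b j : ℕ} (i t : ℕ) (hj : j < b) :
    (b * i + j) % (b * t) = b * (i % t) + j := by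
  rw [Nat.mod_mul, Nat.mul_add_mod, Nat.mod_eq_of_lt hj, Nat.mul_add_div (by omega),
    Nat.div_eq_of_lt hj, add_zero, add_comm]

theorem Nat.pow_mul_mul_add_mod_pow {b k n : ℕ} (hkn : k < n) (i : ℕ) {j : ℕ} (hj : j < b) :
    b ^ k * (b * i + j) % b ^ n = b ^ k * (b * (i % b ^ (n - k - 1)) + j) := by
  have hn : b ^ n = b ^ k * (b * b ^ (n - k - 1)) := by
    rw [← pow_succ', ← pow_add]; congr 1; omega
  rw [hn, Nat.mul_mod_mul_left, Nat.mul_add_mod_mul_of_lt i _ hj]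

namespace List

variable {α : Type*}

theorem getD_append_singleton_append_singleton_append_of_mod_ne_zero
    (A : List α) (a b d : α) {p : ℕ} (hp : p < 3 * (A.length + 1))
    (hr : p % (A.length + 1) ≠ 0) :
    (A ++ [a] ++ A ++ [b] ++ A).getD (p - 1) d = A.getD (p % (A.length + 1) - 1) d := by
  have hdiv := Nat.div_add_mod p (A.length + 1)
  have hmod := Nat.mod_lt p A.length.succ_pos
  have hq : p / (A.length + 1) < 3 := Nat.div_lt_of_lt_mul (by linarith)
  generalize p / (A.length + 1) = q at hdiv hq
  generalize p % (A.length + 1) = r at hdiv hmod hr ⊢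
  subst hdiv
  interval_cases q
  · rw [getD_append _ _ _ _ (by simp; omega), getD_append _ _ _ _ (by simp; omega),
      getD_append _ _ _ _ (by simp; omega), getD_append _ _ _ _ (by simp; omega)]
    congr 1; omega
  · rw [getD_append _ _ _ _ (by simp; omega), getD_append _ _ _ _ (by simp; omega),
      getD_append_right _ _ _ _ (by simp; omega)]
    congr 1; simp; omega
  · rw [getD_append_right _ _ _ _ (by simp; omega)]
    congr 1; simp; omega

theorem getD_append_singleton_append_singleton_append_length (A : List α) (a b d : α) :
    (A ++ [a] ++ A ++ [b] ++ A).getD A.length d = a := by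
  grind

theorem getD_append_singleton_append_singleton_append_two_mul_length (A : List α) (a b d : α) :
    (A ++ [a] ++ A ++ [b] ++ A).getD (2 * A.length + 1) d = b := by
  grind

end List

theorem length_foldTAux (L : List ℤ) : (foldTAux L).length = 3 ^ L.length - 1 := by
  induction L with
  | nil => rfl
  | cons lam L ih =>
    have := Nat.one_le_pow L.length 3 (by norm_num)
    simp only [foldTAux, List.length_append, ih, List.length_cons, List.length_nil, pow_succ]
    omega

theorem length_foldT_add_one (Λ : List ℤ) : (foldT Λ).length + 1 = 3 ^ Λ.length := by
  rw [foldT, length_foldTAux, List.length_reverse]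
  exact Nat.sub_add_cancel (Nat.one_le_pow _ _ (by norm_num))

theorem foldT_append_singleton (Λ : List ℤ) (μ : ℤ) :
    foldT (Λ ++ [μ]) = foldT Λ ++ [μ] ++ foldT Λ ++ [-μ] ++ foldT Λ := by
  simp only [foldT, List.reverse_append, List.reverse_singleton, List.singleton_append, foldTAux]

theorem getD_foldT_append_singleton_of_mod_ne_zero (Λ : List ℤ) (μ : ℤ) {p : ℕ}
    (hp : p < 3 ^ (Λ.length + 1)) (hr : p % 3 ^ Λ.length ≠ 0) :
    (foldT (Λ ++ [μ])).getD (p - 1) 0 = (foldT Λ).getD (p % 3 ^ Λ.length - 1) 0 := by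
  rw [pow_succ, mul_comm] at hp
  rw [← length_foldT_add_one] at hp hr ⊢
  rw [foldT_append_singleton,
    List.getD_append_singleton_append_singleton_append_of_mod_ne_zero _ _ _ _ hp hr]

theorem getD_foldT_append_singleton_pow (Λ : List ℤ) (μ : ℤ) :
    (foldT (Λ ++ [μ])).getD (3 ^ Λ.length - 1) 0 = μ := by
  rw [← length_foldT_add_one, Nat.add_sub_cancel, foldT_append_singleton,
    List.getD_append_singleton_append_singleton_append_length]

theorem getD_foldT_append_singleton_two_mul_pow (Λ : List ℤ) (μ : ℤ) :
    (foldT (Λ ++ [μ])).getD (2 * 3 ^ Λ.length - 1) 0 = -μ := by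
  rw [← length_foldT_add_one,
    show 2 * ((foldT Λ).length + 1) - 1 = 2 * (foldT Λ).length + 1 by omega,
    foldT_append_singleton, List.getD_append_singleton_append_singleton_append_two_mul_length]

theorem getD_foldT_pow_mul {k : ℕ} {Λ : List ℤ} (hk : k < Λ.length) (i : ℕ) {j : ℕ}
    (hj : j = 1 ∨ j = 2) (hp : 3 ^ k * (3 * i + j) < 3 ^ Λ.length) :
    (foldT Λ).getD (3 ^ k * (3 * i + j) - 1) 0 = if j = 1 then Λ.getD k 0 else -Λ.getD k 0 := by
  induction Λ using List.reverseRecOn generalizing i with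
  | nil => simp at hk
  | append_singleton Λ μ ih =>
    rw [List.length_append, List.length_singleton] at hk hp
    rcases (Nat.lt_succ_iff.mp hk).lt_or_eq with hlt | rfl
    · have hr := Nat.pow_mul_mul_add_mod_pow hlt i (b := 3) (j := j) (by omega)
      have hr0 : 3 ^ k * (3 * i + j) % 3 ^ Λ.length ≠ 0 := by
        rw [hr]; exact Nat.mul_ne_zero (by positivity) (by omega)
      rw [getD_foldT_append_singleton_of_mod_ne_zero _ _ hp hr0, hr,
        ih hlt _ (hr ▸ Nat.mod_lt _ (by positivity)), List.getD_append _ _ _ _ hlt]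
    · have hi : i = 0 := by
        by_contra hi
        have : 3 ^ Λ.length * 3 ≤ 3 ^ Λ.length * (3 * i + j) :=
          Nat.mul_le_mul_left _ (by omega)
        rw [pow_succ] at hp; omega
      subst hi
      have hμ : (Λ ++ [μ]).getD Λ.length 0 = μ := by simp
      rcases hj with rfl | rfl
      · rw [show 3 ^ Λ.length * (3 * 0 + 1) = 3 ^ Λ.length by ring,
          getD_foldT_append_singleton_pow, if_pos rfl, hμ]
      · rw [show 3 ^ Λ.length * (3 * 0 + 2) = 2 * 3 ^ Λ.length by ring,
          getD_foldT_append_singleton_two_mul_pow, if_neg (by norm_num), hμ]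

theorem foldT_entries_general (Λ : List ℤ)
    (k : ℕ) (hk : k < Λ.length) (i : ℕ) :
    (3 ^ k * (3 * i + 1) ≤ 3 ^ Λ.length - 1 →
      (foldT Λ).getD (3 ^ k * (3 * i + 1) - 1) 0 = Λ.getD k 0) ∧
    (3 ^ k * (3 * i + 2) ≤ 3 ^ Λ.length - 1 →
      (foldT Λ).getD (3 ^ k * (3 * i + 2) - 1) 0 = -Λ.getD k 0) := by
  have := Nat.one_le_pow Λ.length 3 (by norm_num)
  refine ⟨fun h ↦ ?_, fun h ↦ ?_⟩
  · simpa using getD_foldT_pow_mul hk i (Or.inl rfl) (by omega)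
  · simpa using getD_foldT_pow_mul hk i (Or.inr rfl) (by omega)

theorem foldT_entries (Λ : List ℤ) (hΛ : ∀ x ∈ Λ, x = 1 ∨ x = -1)
    (k : ℕ) (hk : k < Λ.length) (i : ℕ) :
    (3 ^ k * (3 * i + 1) ≤ 3 ^ Λ.length - 1 →
      (foldT Λ).getD (3 ^ k * (3 * i + 1) - 1) 0 = Λ.getD k 0) ∧
    (3 ^ k * (3 * i + 2) ≤ 3 ^ Λ.length - 1 →
      (foldT Λ).getD (3 ^ k * (3 * i + 2) - 1) 0 = -Λ.getD k 0) :=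
  foldT_entries_general Λ k hk i
end

section
/- A list s = (s₁, …, s_{3ⁿ−1}) ∈ {−1,+1}^{3ⁿ−1} equals T_{λ₁⋯λₙ} for some λ₁, …, λₙ ∈ {−1,+1} if and only if for every k with 0 ≤ k ≤ n−1 and all i, j ≥ 0 with indices in range, s at position 3^k(3i+1) equals the negation of s at position 3^k(3j+2). -/
lemma foldTAux_length (L : List ℤ) : (foldTAux L).length + 1 = 3 ^ L.length := by
  induction L with
  | nil => simp [foldTAux]
  | cons lam L ih =>
    rw [List.length_cons, pow_succ]
    simp only [foldTAux, List.length_append, List.length_singleton]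
    omega

lemma getD5 (A : List ℤ) (a b : ℤ) (p : ℕ) :
    (A ++ [a] ++ A ++ [b] ++ A).getD p 0 =
      if p < A.length then A.getD p 0
      else if p = A.length then a
      else if p < 2 * A.length + 1 then A.getD (p - A.length - 1) 0
      else if p = 2 * A.length + 1 then b
      else A.getD (p - 2 * A.length - 2) 0 := by
  have l1 : (A ++ [a]).length = A.length + 1 := by simp
  have l2 : (A ++ [a] ++ A).length = 2 * A.length + 1 := by simp; omega
  have l3 : (A ++ [a] ++ A ++ [b]).length = 2 * A.length + 2 := by simp; omega
  rcases lt_trichotomy p A.length with h1 | h1 | h1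
  · rw [if_pos h1,
      List.getD_append (A ++ [a] ++ A ++ [b]) A 0 p (by omega),
      List.getD_append (A ++ [a] ++ A) [b] 0 p (by omega),
      List.getD_append (A ++ [a]) A 0 p (by omega),
      List.getD_append A [a] 0 p h1]
  · rw [if_neg (by omega), if_pos h1,
      List.getD_append (A ++ [a] ++ A ++ [b]) A 0 p (by omega),
      List.getD_append (A ++ [a] ++ A) [b] 0 p (by omega),
      List.getD_append (A ++ [a]) A 0 p (by omega),
      List.getD_append_right A [a] 0 p (by omega)]
    have : p - A.length = 0 := by omega
    rw [this]; rfl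
  · rw [if_neg (by omega), if_neg (by omega)]
    rcases lt_trichotomy p (2 * A.length + 1) with h2 | h2 | h2
    · rw [if_pos h2,
        List.getD_append (A ++ [a] ++ A ++ [b]) A 0 p (by omega),
        List.getD_append (A ++ [a] ++ A) [b] 0 p (by omega),
        List.getD_append_right (A ++ [a]) A 0 p (by omega)]
      rw [l1]
      congr 1
    · rw [if_neg (by omega), if_pos h2,
        List.getD_append (A ++ [a] ++ A ++ [b]) A 0 p (by omega),
        List.getD_append_right (A ++ [a] ++ A) [b] 0 p (by omega)]
      rw [l2]
      have : p - (2 * A.length + 1) = 0 := by omega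
      rw [this]; rfl
    · rw [if_neg (by omega), if_neg (by omega),
        List.getD_append_right (A ++ [a] ++ A ++ [b]) A 0 p (by omega)]
      rw [l3]
      congr 1

lemma core (L : List ℤ) (k r : ℕ) (hr : r % 3 ≠ 0) (hk : k < L.length)
    (hm : 3 ^ k * r < 3 ^ L.length) :
    (foldTAux L).getD (3 ^ k * r - 1) 0 =
      (if r % 3 = 1 then (1 : ℤ) else -1) * L.getD (L.length - 1 - k) 0 := by
  induction L generalizing k r with
  | nil => simp at hk
  | cons lam L ih =>
    have hA := foldTAux_length L
    set A := foldTAux L with hAdef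
    set N := 3 ^ L.length with hNdef
    have hN1 : 1 ≤ N := Nat.one_le_pow _ _ (by norm_num)
    have hP1 : 1 ≤ 3 ^ k := Nat.one_le_pow _ _ (by norm_num)
    have hr1 : 1 ≤ r := by omega
    have hkL : k < L.length + 1 := by simpa using hk
    have hm1 : 1 ≤ 3 ^ k * r := Nat.mul_le_mul hP1 hr1
    have hmN : 3 ^ k * r < 3 * N := by
      have : (3:ℕ) ^ (lam :: L).length = 3 * N := by
        rw [List.length_cons, pow_succ, hNdef]; ring
      omega
    show (A ++ [lam] ++ A ++ [-lam] ++ A).getD (3 ^ k * r - 1) 0 = _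
    clear_value A N
    rw [getD5]
    rcases Nat.lt_or_ge k L.length with hk' | hk'
    · -- k < L.length
      have hQ : N = 3 ^ k * 3 ^ (L.length - k) := by
        rw [hNdef, ← pow_add]; congr 1; omega
      set Q := 3 ^ (L.length - k) with hQdef
      clear_value Q
      obtain ⟨d, hd⟩ : (3:ℕ) ∣ Q := hQdef ▸ dvd_pow_self 3 (by omega)
      have hgetL : (lam :: L).getD ((lam :: L).length - 1 - k) 0
          = L.getD (L.length - 1 - k) 0 := by
        have : (lam :: L).length - 1 - k = (L.length - 1 - k) + 1 := by
          rw [List.length_cons]; omega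
        rw [this, List.getD_cons_succ]
      rcases lt_trichotomy (3 ^ k * r) N with h | h | h
      · rw [if_pos (show 3 ^ k * r - 1 < A.length by omega)]
        rw [ih k r hr hk' (by omega), hgetL]
      · exfalso
        rw [hQ] at h
        have h0 : (0:ℕ) < 3 ^ k := by omega
        have : r = Q := Nat.eq_of_mul_eq_mul_left h0 h
        omega
      · have hrQ : Q < r := by
          rw [hQ] at h
          exact lt_of_mul_lt_mul_left h (by positivity)
        rcases lt_trichotomy (3 ^ k * r) (2 * N) with h2 | h2 | h2
        · rw [if_neg (show ¬(3 ^ k * r - 1 < A.length) by omega),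
            if_neg (show ¬(3 ^ k * r - 1 = A.length) by omega),
            if_pos (show 3 ^ k * r - 1 < 2 * A.length + 1 by omega)]
          have hsplit : 3 ^ k * r = N + 3 ^ k * (r - Q) := by
            have ha1 : 3 ^ k * (Q + (r - Q)) = 3 ^ k * Q + 3 ^ k * (r - Q) :=
              Nat.mul_add _ _ _
            have ha2 : Q + (r - Q) = r := by omega
            rw [ha2] at ha1
            omega
          have hidx : 3 ^ k * r - 1 - A.length - 1 = 3 ^ k * (r - Q) - 1 := by omega
          rw [hidx, ih k (r - Q) (by omega) hk' (by omega), hgetL]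
          have : (r - Q) % 3 = r % 3 := by omega
          rw [this]
        · exfalso
          have hb1 : 3 ^ k * (2 * Q) = 2 * N := by rw [hQ]; ring
          have h0 : (0:ℕ) < 3 ^ k := by omega
          have hrq : r = 2 * Q := Nat.eq_of_mul_eq_mul_left h0 (by omega)
          omega
        · rw [if_neg (show ¬(3 ^ k * r - 1 < A.length) by omega),
            if_neg (show ¬(3 ^ k * r - 1 = A.length) by omega),
            if_neg (show ¬(3 ^ k * r - 1 < 2 * A.length + 1) by omega),
            if_neg (show ¬(3 ^ k * r - 1 = 2 * A.length + 1) by omega)]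
          have hb1 : 3 ^ k * (2 * Q) = 2 * N := by rw [hQ]; ring
          have hr2Q : 2 * Q < r := by
            have : 3 ^ k * (2 * Q) < 3 ^ k * r := by omega
            exact lt_of_mul_lt_mul_left this (by positivity)
          have hsplit : 3 ^ k * r = 2 * N + 3 ^ k * (r - 2 * Q) := by
            have ha1 : 3 ^ k * (2 * Q + (r - 2 * Q)) = 3 ^ k * (2 * Q) + 3 ^ k * (r - 2 * Q) :=
              Nat.mul_add _ _ _
            have ha2 : 2 * Q + (r - 2 * Q) = r := by omega
            rw [ha2] at ha1
            omega
          have hidx : 3 ^ k * r - 1 - 2 * A.length - 2 = 3 ^ k * (r - 2 * Q) - 1 := by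
            omega
          rw [hidx, ih k (r - 2 * Q) (by omega) hk' (by omega), hgetL]
          have : (r - 2 * Q) % 3 = r % 3 := by omega
          rw [this]
    · -- k = L.length, so 3^k = N and r < 3
      have hkeq : k = L.length := by omega
      have hkN : (3:ℕ) ^ k = N := by rw [hNdef, hkeq]
      have hr3 : r < 3 := by
        by_contra hc
        push_neg at hc
        have : 3 * N ≤ 3 ^ k * r := by
          calc 3 * N = N * 3 := by ring
          _ ≤ 3 ^ k * r := by rw [hkN]; exact Nat.mul_le_mul_left N hc
        omega
      have hget0 : (lam :: L).getD ((lam :: L).length - 1 - k) 0 = lam := by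
        have : (lam :: L).length - 1 - k = 0 := by rw [List.length_cons]; omega
        rw [this]; rfl
      interval_cases r
      · rw [hkN, Nat.mul_one]
        rw [if_neg (show ¬(N - 1 < A.length) by omega),
          if_pos (show N - 1 = A.length by omega)]
        rw [hget0]; norm_num
      · rw [hkN]
        rw [if_neg (show ¬(N * 2 - 1 < A.length) by omega),
          if_neg (show ¬(N * 2 - 1 = A.length) by omega),
          if_neg (show ¬(N * 2 - 1 < 2 * A.length + 1) by omega),
          if_pos (show N * 2 - 1 = 2 * A.length + 1 by omega)]
        rw [hget0]; norm_num

lemma exists_factor : ∀ m : ℕ, m ≠ 0 → ∃ k r : ℕ, m = 3 ^ k * r ∧ r % 3 ≠ 0 := by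
  intro m
  induction m using Nat.strong_induction_on with
  | _ m ih =>
    intro hm
    by_cases h3 : m % 3 = 0
    · obtain ⟨k, r, hkr, hr⟩ := ih (m / 3) (Nat.div_lt_self (by omega) (by norm_num))
        (by omega)
      refine ⟨k + 1, r, ?_, hr⟩
      have hm3 : m = 3 * (m / 3) := by omega
      rw [hm3, hkr, pow_succ]; ring
    · exact ⟨0, m, by simp, h3⟩

theorem foldT_characterization (n : ℕ) (s : List ℤ)
    (hs : ∀ x ∈ s, x = 1 ∨ x = -1) (hlen : s.length = 3 ^ n - 1) :
    (∃ Λ : List ℤ, Λ.length = n ∧ (∀ x ∈ Λ, x = 1 ∨ x = -1) ∧ s = foldT Λ) ↔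
    (∀ k < n, ∀ i j : ℕ,
      3 ^ k * (3 * i + 1) ≤ 3 ^ n - 1 → 3 ^ k * (3 * j + 2) ≤ 3 ^ n - 1 →
      s.getD (3 ^ k * (3 * i + 1) - 1) 0 = -s.getD (3 ^ k * (3 * j + 2) - 1) 0) := by
  have h3n : 1 ≤ 3 ^ n := Nat.one_le_pow _ _ (by norm_num)
  constructor
  · rintro ⟨Λ, hΛlen, hΛpm, rfl⟩
    intro k hk i j hi hj
    have hL : Λ.reverse.length = n := by simp [hΛlen]
    have h3k1 : 1 ≤ 3 ^ k := Nat.one_le_pow _ _ (by norm_num)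
    simp only [foldT]
    rw [core Λ.reverse k (3 * i + 1) (by omega) (by omega)
        (by rw [hL]; omega),
      core Λ.reverse k (3 * j + 2) (by omega) (by omega)
        (by rw [hL]; omega)]
    have e1 : (3 * i + 1) % 3 = 1 := by omega
    have e2 : (3 * j + 2) % 3 = 2 := by omega
    rw [e1, e2]
    norm_num
  · intro h
    refine ⟨(List.range n).map (fun k => s.getD (3 ^ k - 1) 0), by simp, ?_, ?_⟩
    · intro x hx
      simp only [List.mem_map, List.mem_range] at hx
      obtain ⟨k, hk, rfl⟩ := hx
      have hkn : 3 ^ (k + 1) ≤ 3 ^ n := Nat.pow_le_pow_right (by norm_num) (by omega)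
      have h3k1 : 1 ≤ 3 ^ k := Nat.one_le_pow _ _ (by norm_num)
      have hpow : 3 ^ (k + 1) = 3 ^ k * 3 := pow_succ 3 k
      have hlt : 3 ^ k - 1 < s.length := by omega
      rw [List.getD_eq_getElem _ _ hlt]
      exact hs _ (List.getElem_mem hlt)
    · set Λ := (List.range n).map (fun k => s.getD (3 ^ k - 1) 0) with hΛdef
      clear_value Λ
      have hΛlen : Λ.length = n := by simp [hΛdef]
      have hrevlen : Λ.reverse.length = n := by simp [hΛlen]
      have hflen : (foldT Λ).length = 3 ^ n - 1 := by
        have := foldTAux_length Λ.reverse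
        rw [hrevlen] at this
        simp only [foldT]
        omega
      apply List.ext_getElem (by omega)
      intro p hp1 hp2
      obtain ⟨k, r, hfac, hr⟩ := exists_factor (p + 1) (by omega)
      have h3k1 : 1 ≤ 3 ^ k := Nat.one_le_pow _ _ (by norm_num)
      have hr1 : 1 ≤ r := by omega
      have hkn : k < n := by
        by_contra hc
        push_neg at hc
        have h1 : 3 ^ n ≤ 3 ^ k := Nat.pow_le_pow_right (by norm_num) hc
        have h2 : 3 ^ k ≤ 3 ^ k * r := Nat.le_mul_of_pos_right _ (by omega)
        omega
      have hkn1 : 3 ^ (k + 1) ≤ 3 ^ n := Nat.pow_le_pow_right (by norm_num) (by omega)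
      have hpow : 3 ^ (k + 1) = 3 ^ k * 3 := pow_succ 3 k
      have hΛk : Λ.reverse.getD (n - 1 - k) 0 = s.getD (3 ^ k - 1) 0 := by
        rw [List.getD_eq_getElem _ _ (by rw [hrevlen]; omega)]
        rw [List.getElem_reverse]
        have hidx : Λ.length - 1 - (n - 1 - k) = k := by omega
        simp only [hidx]
        simp only [hΛdef, List.getElem_map, List.getElem_range]
      rw [← List.getD_eq_getElem s 0 hp1, ← List.getD_eq_getElem (foldT Λ) 0 hp2]
      have hpidx : p = 3 ^ k * r - 1 := by omega
      rw [hpidx]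
      simp only [foldT]
      rw [core Λ.reverse k r hr (by rw [hrevlen]; exact hkn) (by rw [hrevlen]; omega)]
      rw [hrevlen, hΛk]
      have hmle : 3 ^ k * r ≤ 3 ^ n - 1 := by omega
      have h2le : 3 ^ k * 2 ≤ 3 ^ n - 1 := by omega
      have h1le : 3 ^ k * 1 ≤ 3 ^ n - 1 := by omega
      rcases (by omega : r % 3 = 1 ∨ r % 3 = 2) with hc | hc
      · have hri : 3 * (r / 3) + 1 = r := by omega
        have ha := h k hkn (r / 3) 0 (by rw [hri]; omega) (by omega)
        have hb := h k hkn 0 0 (by omega) (by omega)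
        rw [hri] at ha
        have e1 : 3 ^ k * (3 * 0 + 1) = 3 ^ k := by ring
        rw [e1] at hb
        rw [if_pos hc, one_mul]
        rw [ha, hb]
      · have hri : 3 * (r / 3) + 2 = r := by omega
        have ha := h k hkn 0 (r / 3) (by omega) (by rw [hri]; omega)
        rw [hri] at ha
        have e1 : 3 ^ k * (3 * 0 + 1) = 3 ^ k := by ring
        rw [e1] at ha
        rw [if_neg (by omega)]
        rw [ha]
        ring
end

section
/- Let (n_k)_{k≥1} be a sequence of integers such that the arithmetic progressions n_k + 2^k ℤ (k ≥ 1) are pairwise disjoint subsets of ℤ. Then the complement ℤ ∖ ⋃_{k≥1} (n_k + 2^k ℤ) contains at most one element. -/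
lemma mem_prog_iff (a c x : ℤ) : (∃ m : ℤ, x = a + c * m) ↔ c ∣ x - a := by
  constructor
  · rintro ⟨m, rfl⟩; exact ⟨m, by ring⟩
  · rintro ⟨m, hm⟩; exact ⟨m, by linarith⟩

lemma key (n : ℕ → ℤ)
    (hdisj : ∀ k l : ℕ, 1 ≤ k → 1 ≤ l → k ≠ l →
      Disjoint {x : ℤ | ∃ m : ℤ, x = n k + 2 ^ k * m}
               {x : ℤ | ∃ m : ℤ, x = n l + 2 ^ l * m}) :
    ∀ k : ℕ, ∀ x y : ℤ,
      (∀ j, 1 ≤ j → j ≤ k → ¬ (2:ℤ) ^ j ∣ x - n j) →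
      (∀ j, 1 ≤ j → j ≤ k → ¬ (2:ℤ) ^ j ∣ y - n j) →
      (2:ℤ) ^ k ∣ x - y := by
  intro k
  induction k with
  | zero => intro x y _ _; simpa using dvd_refl (1 : ℤ)
  | succ k ih =>
    intro x y hx hy
    -- n (k+1) avoids A_j for 1 ≤ j ≤ k
    have hn : ∀ j, 1 ≤ j → j ≤ k → ¬ (2:ℤ) ^ j ∣ n (k+1) - n j := by
      intro j hj1 hjk hdvd
      have hne : j ≠ k + 1 := by omega
      have hd := hdisj j (k+1) hj1 (by omega) hne
      have h1 : n (k+1) ∈ {x : ℤ | ∃ m : ℤ, x = n j + 2 ^ j * m} := by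
        rw [Set.mem_setOf_eq, mem_prog_iff]; exact hdvd
      have h2 : n (k+1) ∈ {x : ℤ | ∃ m : ℤ, x = n (k+1) + 2 ^ (k+1) * m} :=
        ⟨0, by ring⟩
      exact (Set.disjoint_left.mp hd h1) h2
    obtain ⟨t, ht⟩ := ih x (n (k+1)) (fun j h1 h2 => hx j h1 (by omega)) hn
    obtain ⟨s, hs⟩ := ih y (n (k+1)) (fun j h1 h2 => hy j h1 (by omega)) hn
    have hxk : ¬ (2:ℤ) ^ (k+1) ∣ x - n (k+1) := hx (k+1) (by omega) le_rfl
    have hyk : ¬ (2:ℤ) ^ (k+1) ∣ y - n (k+1) := hy (k+1) (by omega) le_rfl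
    have ht' : ¬ (2:ℤ) ∣ t := by
      rintro ⟨u, rfl⟩
      exact hxk ⟨u, by rw [ht]; ring⟩
    have hs' : ¬ (2:ℤ) ∣ s := by
      rintro ⟨u, rfl⟩
      exact hyk ⟨u, by rw [hs]; ring⟩
    have hts : (2:ℤ) ∣ t - s := by omega
    obtain ⟨u, hu⟩ := hts
    exact ⟨u, by rw [show x - y = (x - n (k+1)) - (y - n (k+1)) by ring, ht, hs,
      show (2:ℤ)^k * t - 2^k * s = 2^k * (t - s) by ring, hu]; ring⟩

theorem complement_of_disjoint_dyadic_progressions (n : ℕ → ℤ)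
    (hdisj : ∀ k l : ℕ, 1 ≤ k → 1 ≤ l → k ≠ l →
      Disjoint {x : ℤ | ∃ m : ℤ, x = n k + 2 ^ k * m}
               {x : ℤ | ∃ m : ℤ, x = n l + 2 ^ l * m}) :
    Set.Subsingleton {x : ℤ | ∀ k : ℕ, 1 ≤ k → ¬∃ m : ℤ, x = n k + 2 ^ k * m} := by
  intro x hx y hy
  have hx' : ∀ j, 1 ≤ j → ¬ (2:ℤ) ^ j ∣ x - n j := fun j hj h =>
    hx j hj ((mem_prog_iff _ _ _).mpr h)
  have hy' : ∀ j, 1 ≤ j → ¬ (2:ℤ) ^ j ∣ y - n j := fun j hj h =>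
    hy j hj ((mem_prog_iff _ _ _).mpr h)
  have hdvd : ∀ k : ℕ, (2:ℤ) ^ k ∣ x - y := fun k =>
    key n hdisj k x y (fun j h1 _ => hx' j h1) (fun j h1 _ => hy' j h1)
  by_contra hne
  have h0 : x - y ≠ 0 := sub_ne_zero.mpr hne
  obtain ⟨k, hk⟩ := pow_unbounded_of_one_lt (|x - y|) (by norm_num : (1:ℤ) < 2)
  have h2 : (2:ℤ) ^ k ≤ |x - y| :=
    Int.le_of_dvd (abs_pos.mpr h0) ((dvd_abs _ _).mpr (hdvd k))
  omega
end

section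
/- Let ω = e^{2πi/3} ∈ ℂ. For a finite list a = (a₁, …, a_m) of integers, define the endpoint E(a) = Σ_{j=0}^{m} ω^{c_j}, where c_j = a₁ + ⋯ + a_j (c₀ = 0). Then for all n ≥ 0 and λ₁, …, λₙ ∈ {−1,+1}, with T_{λ₁⋯λₙ} defined recursively by T = [] and T_{λ₁⋯λ_{n+1}} = T_{λ₁⋯λₙ} ++ [λ_{n+1}] ++ T_{λ₁⋯λₙ} ++ [−λ_{n+1}] ++ T_{λ₁⋯λₙ}, we have E(T_{λ₁⋯λₙ}) = ∏_{k=1}^{n} (2 + ω^{λ_k}). -/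
/-- The primitive cube root of unity `ω = e^{2πi/3}`. -/
noncomputable def ω : ℂ := Complex.exp (2 * Real.pi * Complex.I / 3)

/-- The endpoint of the unit-step path with turning sequence `a`:
`E a = Σ_{j=0}^{m} ω^{c_j}` where `c_j` is the `j`-th partial sum of `a`. -/
noncomputable def endpointT (a : List ℤ) : ℂ :=
  ((List.range (a.length + 1)).map (fun j => ω ^ ((a.take j).sum))).sum

lemma omega_ne_zero : ω ≠ 0 := Complex.exp_ne_zero _

lemma endpointT_nil : endpointT [] = 1 := by simp [endpointT]

lemma endpointT_cons (x : ℤ) (a : List ℤ) :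
    endpointT (x :: a) = 1 + ω ^ x * endpointT a := by
  simp only [endpointT, List.length_cons]
  rw [List.range_succ_eq_map]
  simp only [List.map_cons, List.sum_cons, List.take_zero, List.sum_nil, zpow_zero,
    List.map_map, Function.comp_def, List.take_succ_cons, List.sum_cons,
    zpow_add₀ omega_ne_zero]
  rw [List.sum_map_mul_left]

lemma endpointT_append (a b : List ℤ) :
    endpointT (a ++ b) = endpointT a - ω ^ a.sum + ω ^ a.sum * endpointT b := by
  induction a with
  | nil => simp [endpointT_nil]
  | cons x a ih =>
      simp only [List.cons_append, endpointT_cons, ih, List.sum_cons,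
        zpow_add₀ omega_ne_zero]
      ring

lemma sum_foldTAux (L : List ℤ) : (foldTAux L).sum = 0 := by
  induction L with
  | nil => simp [foldTAux]
  | cons x L ih => simp [foldTAux, ih]

lemma endpoint_foldTAux (L : List ℤ) :
    endpointT (foldTAux L) = (L.map (fun l => 2 + ω ^ l)).prod := by
  induction L with
  | nil => simp [foldTAux, endpointT_nil]
  | cons x L ih =>
      have hs := sum_foldTAux L
      simp only [foldTAux, List.map_cons, List.prod_cons, ← ih]
      rw [List.append_assoc, List.append_assoc, List.append_assoc]
      rw [endpointT_append, hs]
      rw [List.singleton_append, endpointT_cons]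
      rw [endpointT_append, hs]
      rw [List.singleton_append, endpointT_cons]
      have h : ω ^ x * ω ^ (-x) = 1 := by
        rw [← zpow_add₀ omega_ne_zero]; simp
      simp only [zpow_zero]
      linear_combination (endpointT (foldTAux L)) * h

theorem endpoint_foldT (Λ : List ℤ) (hΛ : ∀ x ∈ Λ, x = 1 ∨ x = -1) :
    endpointT (foldT Λ) = (Λ.map (fun l => 2 + ω ^ l)).prod := by
  rw [foldT, endpoint_foldTAux, List.map_reverse, List.prod_reverse]
end
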